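/- Let n, d, N be positive integers with d ≥ 1, and let f be the largest positive integer with C(f,d) ≤ N (assume N ≥ d+1 so f ≥ d+1 exists). Let N' = C(f,d), s = ⌈n/f⌉ (or any s with s·f ≥ n). Then the communication cost π = s·d of the divisible-case IC design satisfies, as a real inequality, π ≤ 2e·n/N^(1/d) + d, where e is Euler's constant. -/
import Mathlib


theorem IC_divisible_comm_bound (n d N f s : ℕ) (hn : 0 < n) (hd : 0 < d) (hN : 0 < N)
    (hNd : d + 1 ≤ N) (hf : d + 1 ≤ f)
    (hfle : Nat.choose f d ≤ N) (hfmax : N < Nat.choose (f + 1) d)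
    (hs : s = ⌈(n : ℝ) / (f : ℝ)⌉₊) :
    ((s * d : ℕ) : ℝ) ≤ 2 * Real.exp 1 * n / (N : ℝ) ^ ((1 : ℝ) / d) + d := by
  set E : ℝ := Real.exp 1 with hE
  have hEpos : (0 : ℝ) < E := Real.exp_pos 1
  have hfpos : (0 : ℝ) < f := by exact_mod_cast lt_of_lt_of_le (Nat.succ_pos d) hf
  have hdpos : (0 : ℝ) < d := by exact_mod_cast hd
  have hnn : (0 : ℝ) ≤ n := by positivity
  -- d^d ≤ d! * E^d
  have hfact : ((d : ℝ)) ^ d / (d.factorial : ℝ) ≤ E ^ d := by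
    rw [hE, Real.exp_one_pow]
    exact Real.pow_div_factorial_le_exp (d : ℝ) hdpos.le d
  have hfactpos : (0 : ℝ) < (d.factorial : ℝ) := by positivity
  have hdd : ((d : ℝ)) ^ d ≤ (d.factorial : ℝ) * E ^ d := by
    rw [div_le_iff₀ hfactpos] at hfact; linarith [hfact]
  -- N ≤ (E * (f+1) / d)^d
  have hchoose : ((Nat.choose (f + 1) d : ℕ) : ℝ) ≤ ((f + 1 : ℕ) : ℝ) ^ d / (d.factorial : ℝ) :=
    Nat.choose_le_pow_div d (f + 1)
  have hNlt : (N : ℝ) < ((Nat.choose (f + 1) d : ℕ) : ℝ) := by exact_mod_cast hfmax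
  have hA : (0 : ℝ) < E * ((f + 1 : ℕ) : ℝ) / d := by positivity
  have hNA : (N : ℝ) ≤ (E * ((f + 1 : ℕ) : ℝ) / d) ^ d := by
    have h1 : ((f + 1 : ℕ) : ℝ) ^ d / (d.factorial : ℝ) ≤ (E * ((f + 1 : ℕ) : ℝ) / d) ^ d := by
      rw [div_pow, mul_pow, div_le_div_iff₀ hfactpos (by positivity)]
      calc ((f + 1 : ℕ) : ℝ) ^ d * (d : ℝ) ^ d
          ≤ ((f + 1 : ℕ) : ℝ) ^ d * ((d.factorial : ℝ) * E ^ d) := by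
            apply mul_le_mul_of_nonneg_left hdd (by positivity)
        _ = E ^ d * ((f + 1 : ℕ) : ℝ) ^ d * (d.factorial : ℝ) := by ring
    linarith [hchoose.trans h1]
  -- take d-th roots
  have hroot : (N : ℝ) ^ ((1 : ℝ) / d) ≤ E * ((f + 1 : ℕ) : ℝ) / d := by
    have := Real.rpow_le_rpow (by positivity) hNA (by positivity : (0:ℝ) ≤ 1 / d)
    rwa [← Real.rpow_natCast (E * ((f + 1 : ℕ) : ℝ) / d) d, ← Real.rpow_mul hA.le,
      mul_one_div_cancel (by exact_mod_cast hd.ne'), Real.rpow_one] at this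
  have hrpos : (0 : ℝ) < (N : ℝ) ^ ((1 : ℝ) / d) := by positivity
  set r : ℝ := (N : ℝ) ^ ((1 : ℝ) / d)
  -- f+1 ≤ 2f, so r ≤ 2*E*f/d, hence d/f ≤ 2*E/r
  have hf2 : ((f + 1 : ℕ) : ℝ) ≤ 2 * f := by
    push_cast
    have : (1 : ℝ) ≤ f := by exact_mod_cast Nat.one_le_of_lt (Nat.lt_of_lt_of_le d.lt_succ_self hf)
    linarith
  have hr2 : r ≤ 2 * E * f / d := by
    refine hroot.trans ?_
    rw [div_le_div_iff₀ hdpos hdpos]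
    have := mul_le_mul_of_nonneg_left hf2 hEpos.le
    nlinarith
  have hdf : (d : ℝ) / f ≤ 2 * E / r := by
    rw [div_le_div_iff₀ hfpos hrpos]
    rw [le_div_iff₀ hdpos] at hr2
    nlinarith
  -- s ≤ n/f + 1
  have hsle : (s : ℝ) ≤ (n : ℝ) / f + 1 := by
    rw [hs]
    exact (Nat.ceil_lt_add_one (by positivity)).le
  have key : ((s * d : ℕ) : ℝ) ≤ ((n : ℝ) / f + 1) * d := by
    push_cast
    exact mul_le_mul_of_nonneg_right hsle hdpos.le
  refine key.trans ?_
  have h3 : (n : ℝ) / f * d = (n : ℝ) * ((d : ℝ) / f) := by ring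
  have h4 : (n : ℝ) * ((d : ℝ) / f) ≤ (n : ℝ) * (2 * E / r) :=
    mul_le_mul_of_nonneg_left hdf hnn
  have h5 : (n : ℝ) * (2 * E / r) = 2 * E * n / r := by ring
  calc ((n : ℝ) / f + 1) * d = (n : ℝ) * ((d : ℝ) / f) + d := by ring
    _ ≤ 2 * E * n / r + d := by rw [← h5]; linarith
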